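/- arXiv:2211.07995 — 6 statements merged into one kernel-verified Lean document; each statement's English description precedes it below -/
import Mathlib

section
/- For every positive integer n, the number of lattice points in the n-th dilate of the convex hull of {(1,0), (0,-1), (-1,0), (0,1/2)} equals the number of lattice points in the n-th dilate of the convex hull of {(-1,0), (0,-1), (1,1)}; in particular the Ehrhart counting function of the rational polytope P = conv{(1,0),(0,-1),(-1,0),(0,1/2)} is a polynomial in n (period collapse). -/
/-!
Both `P` and `Q` lie in the halfplanes `x + y ≥ -1` and `2y - x ≤ 1`, and on the left half
`x ≤ 0` they coincide. The piecewise unimodular shear `(x, y) ↦ (x, y + max x 0)` of `ℤ²` is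
therefore the identity on the left half of `nP`, and on the right half it moves the column
`x - n ≤ y ≤ ⌊(n - x)/2⌋` of `nP` at `x ≥ 0` onto the column `2x - n ≤ y ≤ ⌊(n + x)/2⌋` of `nQ`;
so it maps `nP ∩ ℤ²` bijectively onto `nQ ∩ ℤ²`. Every edge of `Q` is at lattice distance one
from the origin, so the lattice points of `kQ` are those of `(k-1)Q` together with the `3k`
lattice points on the boundary of `kQ`; hence `2 |nQ ∩ ℤ²| = 3n² + 3n + 2`.
-/

open Set Pointwise

namespace PeriodCollapse

def halfplane (a b d : ℝ) : Set (ℝ × ℝ) := {p | a * p.1 + b * p.2 ≤ d}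

lemma convex_halfplane (a b d : ℝ) : Convex ℝ (halfplane a b d) :=
  convex_halfSpace_le ⟨fun p q => by simp only [Prod.fst_add, Prod.snd_add]; ring,
    fun c p => by simp only [Prod.smul_fst, Prod.smul_snd, smul_eq_mul]; ring⟩ d

lemma smul_halfplane {c : ℝ} (hc : 0 < c) (a b d : ℝ) :
    c • halfplane a b d = halfplane a b (c * d) := by
  ext p
  rw [mem_smul_set_iff_inv_smul_mem₀ hc.ne']
  simp only [halfplane, mem_ofPred_eq, Prod.smul_fst, Prod.smul_snd, smul_eq_mul]
  rw [← inv_mul_le_iff₀ hc]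
  ring_nf

lemma mem_convexHull_triple {𝕜 E : Type*} [Field 𝕜] [LinearOrder 𝕜] [IsStrictOrderedRing 𝕜]
    [AddCommGroup E] [Module 𝕜 E] {a b c : E} {α β γ : 𝕜} (hα : 0 ≤ α) (hβ : 0 ≤ β)
    (hγ : 0 ≤ γ) (hsum : α + β + γ = 1) : α • a + β • b + γ • c ∈ convexHull 𝕜 {a, b, c} := by
  have := (convex_convexHull 𝕜 {a, b, c}).sum_mem (t := Finset.univ) (w := ![α, β, γ])
    (z := ![a, b, c]) (by intro i _; fin_cases i <;> assumption)
    (by simpa [Fin.sum_univ_three] using hsum)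
    (by intro i _; apply subset_convexHull; fin_cases i <;> simp)
  simpa [Fin.sum_univ_three] using this

def polytopeP : Set (ℝ × ℝ) := convexHull ℝ {((1 : ℝ), (0 : ℝ)), (0, -1), (-1, 0), (0, 1/2)}

def triangleQ : Set (ℝ × ℝ) := convexHull ℝ {((-1 : ℝ), (0 : ℝ)), (0, -1), (1, 1)}

lemma polytopeP_eq : polytopeP =
    halfplane 1 (-1) 1 ∩ halfplane (-1) (-1) 1 ∩ halfplane (-1) 2 1 ∩ halfplane 1 2 1 := by
  unfold polytopeP
  apply subset_antisymm
  · refine convexHull_min ?_ ((((convex_halfplane ..).inter (convex_halfplane ..)).inter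
      (convex_halfplane ..)).inter (convex_halfplane ..))
    simp only [insert_subset_iff, singleton_subset_iff]
    norm_num [halfplane]
  · rintro ⟨x, y⟩ ⟨⟨⟨h₁, h₂⟩, h₃⟩, h₄⟩
    simp only [halfplane, mem_ofPred_eq] at h₁ h₂ h₃ h₄
    rcases le_total 0 y with hy | hy
    · refine convexHull_mono (s := {(1, 0), (-1, 0), (0, 1/2)})
        (by simp [insert_subset_iff]) ?_
      convert mem_convexHull_triple (α := (1 + x - 2 * y) / 2) (β := (1 - x - 2 * y) / 2)
        (γ := 2 * y) (by linarith) (by linarith) (by linarith) (by ring) using 1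
      ext <;> simp only [Prod.fst_add, Prod.snd_add, Prod.smul_fst, Prod.smul_snd,
        smul_eq_mul] <;> ring
    · refine convexHull_mono (s := {(1, 0), (0, -1), (-1, 0)})
        (by simp [insert_subset_iff]) ?_
      convert mem_convexHull_triple (α := (1 + x + y) / 2) (β := -y) (γ := (1 - x + y) / 2)
        (by linarith) (by linarith) (by linarith) (by ring) using 1
      ext <;> simp only [Prod.fst_add, Prod.snd_add, Prod.smul_fst, Prod.smul_snd,
        smul_eq_mul] <;> ring

lemma triangleQ_eq :
    triangleQ = halfplane (-1) (-1) 1 ∩ halfplane 2 (-1) 1 ∩ halfplane (-1) 2 1 := by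
  unfold triangleQ
  apply subset_antisymm
  · refine convexHull_min ?_ (((convex_halfplane ..).inter (convex_halfplane ..)).inter
      (convex_halfplane ..))
    simp only [insert_subset_iff, singleton_subset_iff]
    norm_num [halfplane]
  · rintro ⟨x, y⟩ ⟨⟨h₁, h₂⟩, h₃⟩
    simp only [halfplane, mem_ofPred_eq] at h₁ h₂ h₃
    convert mem_convexHull_triple (α := (1 - 2 * x + y) / 3) (β := (1 + x - 2 * y) / 3)
      (γ := (1 + x + y) / 3) (by linarith) (by linarith) (by linarith) (by ring) using 1
    ext <;> simp only [Prod.fst_add, Prod.snd_add, Prod.smul_fst, Prod.smul_snd,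
      smul_eq_mul] <;> ring

def latticePoints (S : Set (ℝ × ℝ)) : Set (ℤ × ℤ) := {z | ((z.1 : ℝ), (z.2 : ℝ)) ∈ S}

def latticeP (n : ℤ) : Set (ℤ × ℤ) :=
  {z | z.1 - z.2 ≤ n ∧ -z.1 - z.2 ≤ n ∧ -z.1 + 2 * z.2 ≤ n ∧ z.1 + 2 * z.2 ≤ n}

def latticeQ (n : ℤ) : Set (ℤ × ℤ) :=
  {z | -z.1 - z.2 ≤ n ∧ 2 * z.1 - z.2 ≤ n ∧ -z.1 + 2 * z.2 ≤ n}

lemma latticePoints_smul_polytopeP {n : ℕ} (hn : 0 < n) :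
    latticePoints ((n : ℝ) • polytopeP) = latticeP n := by
  have hn' : (0 : ℝ) < n := by exact_mod_cast hn
  ext z
  rw [polytopeP_eq]
  simp only [smul_set_inter₀ hn'.ne', smul_halfplane hn']
  simp only [latticePoints, latticeP, halfplane, mem_inter_iff, mem_ofPred_eq]
  norm_cast
  simp [and_assoc]

lemma latticePoints_smul_triangleQ {n : ℕ} (hn : 0 < n) :
    latticePoints ((n : ℝ) • triangleQ) = latticeQ n := by
  have hn' : (0 : ℝ) < n := by exact_mod_cast hn
  ext z
  rw [triangleQ_eq]
  simp only [smul_set_inter₀ hn'.ne', smul_halfplane hn']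
  simp only [latticePoints, latticeQ, halfplane, mem_inter_iff, mem_ofPred_eq]
  norm_cast
  simp [and_assoc]

def shear (z : ℤ × ℤ) : ℤ × ℤ := (z.1, z.2 + max z.1 0)

lemma shear_injective : Function.Injective shear := by
  rintro ⟨x, y⟩ ⟨x', y'⟩ h
  simp only [shear, Prod.mk.injEq] at h ⊢
  omega

lemma shear_image_latticeP (n : ℤ) : shear '' latticeP n = latticeQ n := by
  ext ⟨x, y⟩
  simp only [mem_image, shear, latticeP, latticeQ, mem_ofPred_eq, Prod.exists, Prod.mk.injEq]
  constructor
  · rintro ⟨a, b, h, rfl, rfl⟩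
    omega
  · intro h
    exact ⟨x, y - max x 0, by omega, rfl, by omega⟩

lemma ncard_latticeP (n : ℤ) : (latticeP n).ncard = (latticeQ n).ncard := by
  rw [← shear_image_latticeP, ncard_image_of_injective _ shear_injective]

lemma finite_latticeQ (n : ℤ) : (latticeQ n).Finite := by
  refine (finite_Icc (-n, -n) (n, n)).subset ?_
  rintro ⟨x, y⟩ ⟨h₁, h₂, h₃⟩
  simp only [mem_Icc, Prod.mk_le_mk]
  omega

lemma latticeQ_zero : latticeQ 0 = {(0, 0)} := by
  ext ⟨x, y⟩
  simp only [latticeQ, mem_ofPred_eq, mem_singleton_iff, Prod.mk.injEq]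
  omega

lemma ncard_image_Ico_of_injective {α : Type*} {f : ℤ → α} (hf : Function.Injective f)
    (k : ℤ) : (f '' Ico 0 k).ncard = k.toNat := by
  rw [ncard_image_of_injective _ hf, ← Finset.coe_Ico, ncard_coe_finset, Int.card_Ico,
    sub_zero]

/-- The half-open edges `[A, B)`, `[B, C)`, `[C, A)` of `kQ`, where `A = (-k, 0)`, `B = (0, -k)`
and `C = (k, k)`. -/
def boundaryQ (k : ℤ) : Set (ℤ × ℤ) :=
  (fun t => (t - k, -t)) '' Ico 0 k ∪ (fun t => (t, 2 * t - k)) '' Ico 0 k ∪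
    (fun t => (k - 2 * t, k - t)) '' Ico 0 k

lemma latticeQ_eq_union_boundaryQ {k : ℤ} (hk : 0 < k) :
    latticeQ k = latticeQ (k - 1) ∪ boundaryQ k := by
  ext ⟨x, y⟩
  simp only [latticeQ, boundaryQ, mem_union, mem_image, mem_Ico, mem_ofPred_eq, Prod.mk.injEq]
  constructor
  · intro h
    by_cases hin : -x - y ≤ k - 1 ∧ 2 * x - y ≤ k - 1 ∧ -x + 2 * y ≤ k - 1
    · exact Or.inl hin
    right
    by_cases hAB : -x - y = k ∧ x < 0
    · exact Or.inl (Or.inl ⟨x + k, by omega, by omega, by omega⟩)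
    by_cases hBC : 2 * x - y = k ∧ x < k
    · exact Or.inl (Or.inr ⟨x, by omega, rfl, by omega⟩)
    · exact Or.inr ⟨k - y, by omega, by omega, by omega⟩
  · rintro (h | (⟨t, ht, rfl, rfl⟩ | ⟨t, ht, rfl, rfl⟩) | ⟨t, ht, rfl, rfl⟩) <;> omega

lemma disjoint_latticeQ_boundaryQ (k : ℤ) : Disjoint (latticeQ (k - 1)) (boundaryQ k) := by
  rw [disjoint_left]
  rintro _ h ((⟨t, ht, rfl⟩ | ⟨t, ht, rfl⟩) | ⟨t, ht, rfl⟩) <;>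
    simp only [latticeQ, mem_ofPred_eq, mem_Ico] at h ht <;> omega

lemma ncard_boundaryQ (k : ℤ) : (boundaryQ k).ncard = 3 * k.toNat := by
  have injAB : Function.Injective fun t : ℤ => (t - k, -t) := fun s t h => by
    simp only [Prod.mk.injEq] at h; omega
  have injBC : Function.Injective fun t : ℤ => (t, 2 * t - k) := fun s t h => by
    simp only [Prod.mk.injEq] at h; omega
  have injCA : Function.Injective fun t : ℤ => (k - 2 * t, k - t) := fun s t h => by
    simp only [Prod.mk.injEq] at h; omega
  have disjAB_BC : Disjoint ((fun t => (t - k, -t)) '' Ico 0 k)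
      ((fun t => (t, 2 * t - k)) '' Ico 0 k) := by
    rw [disjoint_left]
    rintro _ ⟨s, hs, rfl⟩ ⟨t, ht, h⟩
    simp only [mem_Ico, Prod.mk.injEq] at hs ht h
    omega
  have disjAB_BC_CA : Disjoint ((fun t => (t - k, -t)) '' Ico 0 k ∪
      (fun t => (t, 2 * t - k)) '' Ico 0 k) ((fun t => (k - 2 * t, k - t)) '' Ico 0 k) := by
    rw [disjoint_left]
    rintro _ (⟨s, hs, rfl⟩ | ⟨s, hs, rfl⟩) ⟨t, ht, h⟩ <;>
      simp only [mem_Ico, Prod.mk.injEq] at hs ht h <;> omega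
  rw [boundaryQ, ncard_union_eq disjAB_BC_CA, ncard_union_eq disjAB_BC,
    ncard_image_Ico_of_injective injAB, ncard_image_Ico_of_injective injBC,
    ncard_image_Ico_of_injective injCA]
  ring

lemma ncard_latticeQ_eq {k : ℤ} (hk : 0 < k) :
    (latticeQ k).ncard = (latticeQ (k - 1)).ncard + 3 * k.toNat := by
  rw [latticeQ_eq_union_boundaryQ hk, ncard_union_eq (disjoint_latticeQ_boundaryQ k)
    (finite_latticeQ _) (by rw [boundaryQ]; exact toFinite _), ncard_boundaryQ]

lemma two_mul_ncard_latticeQ (n : ℕ) : 2 * (latticeQ n).ncard = 3 * n ^ 2 + 3 * n + 2 := by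
  induction n with
  | zero => simp [latticeQ_zero]
  | succ n ih =>
    rw [ncard_latticeQ_eq (by positivity), Nat.cast_succ, add_sub_cancel_right,
      show ((n : ℤ) + 1).toNat = n + 1 by omega, mul_add, ih]
    ring

lemma ncard_latticePoints_smul_polytopeP {n : ℕ} (hn : 0 < n) :
    (latticePoints ((n : ℝ) • polytopeP)).ncard =
      (latticePoints ((n : ℝ) • triangleQ)).ncard := by
  rw [latticePoints_smul_polytopeP hn, latticePoints_smul_triangleQ hn, ncard_latticeP]

lemma two_mul_ncard_latticePoints_smul_polytopeP {n : ℕ} (hn : 0 < n) :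
    2 * (latticePoints ((n : ℝ) • polytopeP)).ncard = 3 * n ^ 2 + 3 * n + 2 := by
  rw [ncard_latticePoints_smul_polytopeP hn, latticePoints_smul_triangleQ hn,
    two_mul_ncard_latticeQ]

end PeriodCollapse

open PeriodCollapse Polynomial

/-- Period collapse for `P = conv{(1,0),(0,-1),(-1,0),(0,1/2)}`: for each `n ≥ 1`
the number of lattice points in `nP` equals the number of lattice points in the
`n`-th dilate of the lattice triangle `Q = conv{(-1,0),(0,-1),(1,1)}`; in
particular the Ehrhart counting function of `P` is a polynomial in `n`. -/
theorem period_collapse_example :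
    (∀ n : ℕ, 0 < n →
      Set.ncard {z : ℤ × ℤ | ((z.1 : ℝ), (z.2 : ℝ)) ∈
          (n : ℝ) • convexHull ℝ {((1 : ℝ), (0 : ℝ)), (0, -1), (-1, 0), (0, 1/2)}} =
      Set.ncard {z : ℤ × ℤ | ((z.1 : ℝ), (z.2 : ℝ)) ∈
          (n : ℝ) • convexHull ℝ {((-1 : ℝ), (0 : ℝ)), (0, -1), (1, 1)}}) ∧
    ∃ p : Polynomial ℚ, ∀ n : ℕ, 0 < n →
      (Set.ncard {z : ℤ × ℤ | ((z.1 : ℝ), (z.2 : ℝ)) ∈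
          (n : ℝ) • convexHull ℝ {((1 : ℝ), (0 : ℝ)), (0, -1), (-1, 0), (0, 1/2)}} : ℚ) =
        p.eval (n : ℚ) := by
  refine ⟨fun n hn => ncard_latticePoints_smul_polytopeP hn,
    C (3 / 2) * X ^ 2 + C (3 / 2) * X + 1, fun n hn => ?_⟩
  have hcount : (2 * (latticePoints ((n : ℝ) • polytopeP)).ncard : ℚ) =
      3 * n ^ 2 + 3 * n + 2 := by
    exact_mod_cast two_mul_ncard_latticePoints_smul_polytopeP hn
  change ((latticePoints ((n : ℝ) • polytopeP)).ncard : ℚ) = _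
  simp only [eval_add, eval_mul, eval_pow, eval_C, eval_X, eval_one]
  linarith
end

section
/- Let λ be a Young diagram, r = (a,b) ∈ λ on the ℓ-th diagonal (ℓ = a - b), and define χ_r : ℝ^λ → ℝ^λ by: χ_r(x)_{(i,j)} = x_{(i,j)} if i - j ≠ ℓ or (i,j) ≰ r; χ_r(x)_r = x_r - max(x_{(a-1,b)}, x_{(a,b-1)}); and χ_r(x)_{(i,j)} = max(x_{(i-1,j)}, x_{(i,j-1)}) + min(x_{(i+1,j)}, x_{(i,j+1)}) - x_{(i,j)} for (i,j) < r with i - j = ℓ (with the convention x_p = 0 for p ∉ λ). Then χ_r is a bijection of ℝ^λ, with inverse given by χ_r^{-1}(x)_r = x_r + max(x_{(a-1,b)}, x_{(a,b-1)}), χ_r^{-1}(x)_{(i,j)} = max(x_{(i-1,j)}, x_{(i,j-1)}) + min(x_{(i+1,j)}, x_{(i,j+1)}) - x_{(i,j)} for (i,j) < r on the ℓ-th diagonal, and identity elsewhere. -/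
/-- Pak's piecewise linear map `χ_r` for `r = (a,b)` on the `(a-b)`-th diagonal,
acting on `ℝ^λ` (coordinates off `λ` are fixed, and read as `0` by the
convention `x_p = 0` for `p ∉ λ`). -/
noncomputable def chiR (lam : Finset (ℕ × ℕ)) (a b : ℕ) (x : ℕ × ℕ → ℝ) :
    ℕ × ℕ → ℝ := fun p =>
  if p ∈ lam ∧ (p.1 : ℤ) - p.2 = (a : ℤ) - b ∧ p ≤ (a, b) then
    if p = (a, b) then x p - max (x (a - 1, b)) (x (a, b - 1))
    else max (x (p.1 - 1, p.2)) (x (p.1, p.2 - 1)) +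
         min (x (p.1 + 1, p.2)) (x (p.1, p.2 + 1)) - x p
  else x p

/-- The claimed inverse of Pak's map `χ_r`. -/
noncomputable def chiRInv (lam : Finset (ℕ × ℕ)) (a b : ℕ) (x : ℕ × ℕ → ℝ) :
    ℕ × ℕ → ℝ := fun p =>
  if p ∈ lam ∧ (p.1 : ℤ) - p.2 = (a : ℤ) - b ∧ p ≤ (a, b) then
    if p = (a, b) then x p + max (x (a - 1, b)) (x (a, b - 1))
    else max (x (p.1 - 1, p.2)) (x (p.1, p.2 - 1)) +
         min (x (p.1 + 1, p.2)) (x (p.1, p.2 + 1)) - x p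
  else x p

noncomputable def pakMap (lam : Finset (ℕ × ℕ)) (a b : ℕ) (s : ℝ) (x : ℕ × ℕ → ℝ) :
    ℕ × ℕ → ℝ := fun p =>
  if p ∈ lam ∧ (p.1 : ℤ) - p.2 = (a : ℤ) - b ∧ p ≤ (a, b) then
    if p = (a, b) then x p + s * max (x (a - 1, b)) (x (a, b - 1))
    else max (x (p.1 - 1, p.2)) (x (p.1, p.2 - 1)) +
         min (x (p.1 + 1, p.2)) (x (p.1, p.2 + 1)) - x p
  else x p

theorem chiR_eq_pakMap (lam : Finset (ℕ × ℕ)) (a b : ℕ) :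
    chiR lam a b = pakMap lam a b (-1) := by
  funext x p
  simp only [chiR, pakMap]
  split_ifs <;> ring

theorem chiRInv_eq_pakMap (lam : Finset (ℕ × ℕ)) (a b : ℕ) :
    chiRInv lam a b = pakMap lam a b 1 := by
  funext x p
  simp only [chiRInv, pakMap, one_mul]

namespace pakMap

variable {lam : Finset (ℕ × ℕ)} {a b : ℕ} {s : ℝ} {x : ℕ × ℕ → ℝ} {p : ℕ × ℕ}

theorem apply_of_not_mem (hp : p ∉ lam) : pakMap lam a b s x p = x p :=
  if_neg fun h => hp h.1

theorem apply_of_diag_ne (hp : (p.1 : ℤ) - p.2 ≠ (a : ℤ) - b) : pakMap lam a b s x p = x p :=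
  if_neg fun h => hp h.2.1

theorem apply_self (hr : (a, b) ∈ lam) :
    pakMap lam a b s x (a, b) = x (a, b) + s * max (x (a - 1, b)) (x (a, b - 1)) := by
  rw [pakMap, if_pos ⟨hr, rfl, le_rfl⟩, if_pos rfl]

theorem apply_of_lt (hp : p ∈ lam) (hdiag : (p.1 : ℤ) - p.2 = (a : ℤ) - b) (hlt : p < (a, b)) :
    pakMap lam a b s x p = max (x (p.1 - 1, p.2)) (x (p.1, p.2 - 1)) +
      min (x (p.1 + 1, p.2)) (x (p.1, p.2 + 1)) - x p := by
  rw [pakMap, if_pos ⟨hp, hdiag, hlt.le⟩, if_neg hlt.ne]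

theorem mapsTo (lam : Finset (ℕ × ℕ)) (a b : ℕ) (s : ℝ) :
    Set.MapsTo (pakMap lam a b s) {x | ∀ p, p ∉ lam → x p = 0} {x | ∀ p, p ∉ lam → x p = 0} :=
  fun _ hx p hp => (apply_of_not_mem hp).trans (hx p hp)

/-- The four neighbours of a cell of the `ℓ`-th diagonal lie off it, where `pakMap` is the
identity; so the terms added to `x p` are unchanged by `pakMap` and cancel on applying it again
with the opposite sign. -/
theorem leftInverse_neg (hlam : ∀ p ∈ lam, 1 ≤ p.1 ∧ 1 ≤ p.2) (s : ℝ) :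
    Function.LeftInverse (pakMap lam a b (-s)) (pakMap lam a b s) := by
  intro x
  funext p
  by_cases hp : p ∈ lam ∧ (p.1 : ℤ) - p.2 = (a : ℤ) - b ∧ p ≤ (a, b)
  · obtain ⟨hmem, hdiag, hle⟩ := hp
    obtain ⟨hp1, hp2⟩ := hlam p hmem
    obtain hr | hlt := hle.eq_or_lt
    · subst hr
      rw [apply_self hmem, apply_self hmem, apply_of_diag_ne (by simp only; omega),
        apply_of_diag_ne (by simp only; omega)]
      ring
    · rw [apply_of_lt hmem hdiag hlt, apply_of_lt hmem hdiag hlt,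
        apply_of_diag_ne (by simp only; omega), apply_of_diag_ne (by simp only; omega),
        apply_of_diag_ne (by simp only; omega), apply_of_diag_ne (by simp only; omega)]
      ring
  · rw [pakMap, if_neg hp, pakMap, if_neg hp]

end pakMap

theorem chiR_bijective_general
    (lam : Finset (ℕ × ℕ))
    (hlam1 : ∀ p ∈ lam, 1 ≤ p.1 ∧ 1 ≤ p.2)
    (a b : ℕ) :
    Set.BijOn (chiR lam a b)
      {x : ℕ × ℕ → ℝ | ∀ p, p ∉ lam → x p = 0}
      {x : ℕ × ℕ → ℝ | ∀ p, p ∉ lam → x p = 0} ∧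
    Set.InvOn (chiRInv lam a b) (chiR lam a b)
      {x : ℕ × ℕ → ℝ | ∀ p, p ∉ lam → x p = 0}
      {x : ℕ × ℕ → ℝ | ∀ p, p ∉ lam → x p = 0} := by
  rw [chiR_eq_pakMap, chiRInv_eq_pakMap]
  have hinv : Set.InvOn (pakMap lam a b 1) (pakMap lam a b (-1))
      {x | ∀ p, p ∉ lam → x p = 0} {x | ∀ p, p ∉ lam → x p = 0} :=
    ⟨by simpa only [neg_neg] using (pakMap.leftInverse_neg hlam1 (-1)).leftInvOn _,
     (pakMap.leftInverse_neg hlam1 1).leftInvOn _⟩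
  exact ⟨hinv.bijOn (pakMap.mapsTo lam a b _) (pakMap.mapsTo lam a b _), hinv⟩

/-- Pak's map `χ_r` is a bijection of `ℝ^λ` (realised as the functions on `ℕ²`
vanishing off `λ`), with inverse `chiRInv`. -/
theorem chiR_bijective
    (lam : Finset (ℕ × ℕ))
    (hlam1 : ∀ p ∈ lam, 1 ≤ p.1 ∧ 1 ≤ p.2)
    (hdown : ∀ p ∈ lam, ∀ q : ℕ × ℕ, 1 ≤ q.1 → 1 ≤ q.2 → q ≤ p → q ∈ lam)
    (a b : ℕ) (hr : (a, b) ∈ lam) :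
    Set.BijOn (chiR lam a b)
      {x : ℕ × ℕ → ℝ | ∀ p, p ∉ lam → x p = 0}
      {x : ℕ × ℕ → ℝ | ∀ p, p ∉ lam → x p = 0} ∧
    Set.InvOn (chiRInv lam a b) (chiR lam a b)
      {x : ℕ × ℕ → ℝ | ∀ p, p ∉ lam → x p = 0}
      {x : ℕ × ℕ → ℝ | ∀ p, p ∉ lam → x p = 0} :=
  chiR_bijective_general lam hlam1 a b
end

section
/- With the notation of Pak's map: for a box r = (a,b) ∈ λ on the ℓ-th diagonal, let φ_i = φ_{w_i,F_i} be the tropical maps with w_i = e_{(a-i-1,b-i-1)} - e_{(a-i,b-i)} and F_i = {e_{(a-i-1,b-i)}, e_{(a-i,b-i-1)}}, for 0 ≤ i ≤ min(a,b)-1, and let ψ be the linear map fixing coordinates off the ℓ-th diagonal (within the rectangle below r), sending x_r ↦ x_r - (x_{(a-1,b)} + x_{(a,b-1)}) and x_{(i,j)} ↦ -x_{(i,j)} + x_{(i-1,j)} + x_{(i,j-1)} for (i,j) < r on the ℓ-th diagonal. Then χ_r = ψ ∘ φ_{min(a,b)-1} ∘ ⋯ ∘ φ_0. -/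
/-- The tropical map `φ_i = φ_{w_i, F_i}` with
`w_i = e_{(a-i-1, b-i-1)} - e_{(a-i, b-i)}` and
`F_i = {e_{(a-i-1, b-i)}, e_{(a-i, b-i-1)}}` (where `e_p = 0` for `p ∉ λ`). -/
noncomputable def phiStep (lam : Finset (ℕ × ℕ)) (a b i : ℕ) (x : ℕ × ℕ → ℝ) :
    ℕ × ℕ → ℝ := fun p =>
  x p - min (x (a - i - 1, b - i)) (x (a - i, b - i - 1)) *
    ((if (a - i - 1, b - i - 1) ∈ lam ∧ p = (a - i - 1, b - i - 1) then (1 : ℝ) else 0) -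
     (if (a - i, b - i) ∈ lam ∧ p = (a - i, b - i) then (1 : ℝ) else 0))

/-- The composition `φ_{k-1} ∘ ⋯ ∘ φ_0`. -/
noncomputable def phiComp (lam : Finset (ℕ × ℕ)) (a b : ℕ) : ℕ → (ℕ × ℕ → ℝ) → ℕ × ℕ → ℝ
  | 0 => id
  | k + 1 => phiStep lam a b k ∘ phiComp lam a b k

/-- The unimodular map `ψ`, fixing coordinates off the diagonal of `r = (a,b)`
within the rectangle below `r`. -/
noncomputable def psiMap (lam : Finset (ℕ × ℕ)) (a b : ℕ) (x : ℕ × ℕ → ℝ) :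
    ℕ × ℕ → ℝ := fun p =>
  if p ∈ lam ∧ (p.1 : ℤ) - p.2 = (a : ℤ) - b ∧ p ≤ (a, b) then
    if p = (a, b) then x p - (x (a - 1, b) + x (a, b - 1))
    else -x p + x (p.1 - 1, p.2) + x (p.1, p.2 - 1)
  else x p

/-- The coefficient `min {x · f : f ∈ F_i}` of the tropical map `φ_i`. -/
noncomputable def phiMin (a b i : ℕ) (x : ℕ × ℕ → ℝ) : ℝ :=
  min (x (a - i - 1, b - i)) (x (a - i, b - i - 1))

theorem phiMin_zero (a b : ℕ) (x : ℕ × ℕ → ℝ) :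
    phiMin a b 0 x = min (x (a - 1, b)) (x (a, b - 1)) := by
  simp [phiMin]

theorem phiMin_pred {a b j : ℕ} (hj : 0 < j) (ha : j ≤ a) (hb : j ≤ b) (x : ℕ × ℕ → ℝ) :
    phiMin a b (j - 1) x = min (x (a - j + 1, b - j)) (x (a - j, b - j + 1)) := by
  rw [phiMin, min_comm]
  congr 3 <;> omega

section Steps

variable {lam : Finset (ℕ × ℕ)} {a b : ℕ}

theorem phiStep_apply_of_ne {i : ℕ} {p : ℕ × ℕ} (h₁ : p ≠ (a - i - 1, b - i - 1))
    (h₂ : p ≠ (a - i, b - i)) (x : ℕ × ℕ → ℝ) :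
    phiStep lam a b i x p = x p := by
  simp [phiStep, h₁, h₂]

theorem phiStep_apply_self {i : ℕ} (hi : i < a) (hmem : (a - i, b - i) ∈ lam)
    (x : ℕ × ℕ → ℝ) :
    phiStep lam a b i x (a - i, b - i) = x (a - i, b - i) + phiMin a b i x := by
  have hne : (a - i, b - i) ≠ (a - i - 1, b - i - 1) := by simp only [ne_eq, Prod.ext_iff]; omega
  simp [phiStep, phiMin, hne, hmem]

theorem phiStep_apply_succ {i : ℕ} (hi : i < a) (x : ℕ × ℕ → ℝ) :
    phiStep lam a b i x (a - (i + 1), b - (i + 1)) = x (a - (i + 1), b - (i + 1)) -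
      if (a - (i + 1), b - (i + 1)) ∈ lam then phiMin a b i x else 0 := by
  have hne : (a - (i + 1), b - (i + 1)) ≠ (a - i, b - i) := by
    simp only [ne_eq, Prod.ext_iff]; omega
  split_ifs with hmem <;> simp [phiStep, phiMin, hne, hmem, Nat.sub_sub]

theorem phiComp_zero_apply (x : ℕ × ℕ → ℝ) (p : ℕ × ℕ) : phiComp lam a b 0 x p = x p := rfl

theorem phiComp_apply_of_forall_ne {k n : ℕ} (hkn : k ≤ n) {p : ℕ × ℕ}
    (hp : ∀ i, k ≤ i → i ≤ n → p ≠ (a - i, b - i)) (x : ℕ × ℕ → ℝ) :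
    phiComp lam a b n x p = phiComp lam a b k x p := by
  induction n, hkn using Nat.le_induction with
  | base => rfl
  | succ n hkn ih =>
    rw [phiComp, Function.comp_apply, phiStep_apply_of_ne, ih fun i hi hin => hp i hi (by omega)]
    · simpa [Nat.sub_sub] using hp (n + 1) (by omega) le_rfl
    · exact hp n hkn (by omega)

-- Beyond `min a b` the truncated points `(a - i, b - i)` leave the diagonal.
theorem phiComp_apply_of_not_diag {k : ℕ} (hk : k ≤ min a b) {p : ℕ × ℕ}
    (hp : (p.1 : ℤ) - p.2 ≠ (a : ℤ) - b) (x : ℕ × ℕ → ℝ) :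
    phiComp lam a b k x p = x p :=
  phiComp_apply_of_forall_ne (Nat.zero_le k) (fun i _ hi h => hp (by rw [h]; simp only; omega)) x

theorem phiMin_phiComp {i k : ℕ} (hk : k ≤ min a b) (hi : i < min a b) (x : ℕ × ℕ → ℝ) :
    phiMin a b i (phiComp lam a b k x) = phiMin a b i x := by
  unfold phiMin
  rw [phiComp_apply_of_not_diag hk (by simp only; omega),
    phiComp_apply_of_not_diag hk (by simp only; omega)]

theorem phiComp_succ_apply_self {j : ℕ} (hj : j < min a b) (hmem : (a - j, b - j) ∈ lam)
    (x : ℕ × ℕ → ℝ) :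
    phiComp lam a b (j + 1) x (a - j, b - j) =
      phiComp lam a b j x (a - j, b - j) + phiMin a b j x := by
  rw [phiComp, Function.comp_apply, phiStep_apply_self (by omega) hmem,
    phiMin_phiComp hj.le hj]

theorem phiComp_succ_apply_succ {j : ℕ} (hj : j < min a b) (x : ℕ × ℕ → ℝ) :
    phiComp lam a b (j + 1) x (a - (j + 1), b - (j + 1)) =
      phiComp lam a b j x (a - (j + 1), b - (j + 1)) -
        if (a - (j + 1), b - (j + 1)) ∈ lam then phiMin a b j x else 0 := by
  rw [phiComp, Function.comp_apply, phiStep_apply_succ (by omega), phiMin_phiComp hj.le hj]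

theorem phiComp_min_apply_of_lt {j : ℕ} (hj : j < min a b) (x : ℕ × ℕ → ℝ) :
    phiComp lam a b (min a b) x (a - j, b - j) = phiComp lam a b (j + 1) x (a - j, b - j) :=
  phiComp_apply_of_forall_ne hj (fun i hi _ h => by simp only [Prod.ext_iff] at h; omega) x

end Steps

section YoungDiagram

variable {lam : Finset (ℕ × ℕ)} {a b : ℕ}

theorem diag_mem_of_lt
    (hdown : ∀ p ∈ lam, ∀ q : ℕ × ℕ, 1 ≤ q.1 → 1 ≤ q.2 → q ≤ p → q ∈ lam)
    (hr : (a, b) ∈ lam) {j : ℕ} (hj : j < min a b) : (a - j, b - j) ∈ lam :=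
  hdown _ hr _ (by simp only; omega) (by simp only; omega)
    ⟨by simp only; omega, by simp only; omega⟩

theorem mem_diag_le_iff (hlam1 : ∀ p ∈ lam, 1 ≤ p.1 ∧ 1 ≤ p.2)
    (hdown : ∀ p ∈ lam, ∀ q : ℕ × ℕ, 1 ≤ q.1 → 1 ≤ q.2 → q ≤ p → q ∈ lam)
    (hr : (a, b) ∈ lam) {p : ℕ × ℕ} :
    (p ∈ lam ∧ (p.1 : ℤ) - p.2 = (a : ℤ) - b ∧ p ≤ (a, b)) ↔
      ∃ j < min a b, p = (a - j, b - j) := by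
  constructor
  · rintro ⟨hmem, hdiag, hle, hle'⟩
    have := hlam1 p hmem
    exact ⟨a - p.1, by simp only at hle hle'; omega, by simp only [Prod.ext_iff] at *; omega⟩
  · rintro ⟨j, hj, rfl⟩
    exact ⟨diag_mem_of_lt hdown hr hj, by simp only; omega,
      ⟨by simp only; omega, by simp only; omega⟩⟩

theorem phiComp_min_apply_corner (hr : (a, b) ∈ lam) (hab : 0 < min a b) (x : ℕ × ℕ → ℝ) :
    phiComp lam a b (min a b) x (a, b) = x (a, b) + phiMin a b 0 x := by
  have h := phiComp_min_apply_of_lt (lam := lam) hab x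
  rw [phiComp_succ_apply_self hab (by simpa using hr)] at h
  simpa [phiComp_zero_apply] using h

theorem phiComp_min_apply_diag (hdown : ∀ p ∈ lam, ∀ q : ℕ × ℕ, 1 ≤ q.1 → 1 ≤ q.2 → q ≤ p → q ∈ lam)
    (hr : (a, b) ∈ lam) {j : ℕ} (hj0 : 0 < j) (hj : j < min a b) (x : ℕ × ℕ → ℝ) :
    phiComp lam a b (min a b) x (a - j, b - j) = x (a - j, b - j) + phiMin a b j x -
      min (x (a - j + 1, b - j)) (x (a - j, b - j + 1)) := by
  obtain ⟨i, rfl⟩ : ∃ i, j = i + 1 := ⟨j - 1, by omega⟩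
  have hmem := diag_mem_of_lt hdown hr hj
  rw [phiComp_min_apply_of_lt hj, phiComp_succ_apply_self hj hmem,
    phiComp_succ_apply_succ (by omega), if_pos hmem,
    phiComp_apply_of_forall_ne (Nat.zero_le i) (fun k _ hk h => by simp only [Prod.ext_iff] at h; omega),
    phiComp_zero_apply, ← phiMin_pred hj0 (by omega) (by omega), Nat.add_sub_cancel]
  ring

theorem phiComp_min_apply_of_forall_ne (hlam1 : ∀ p ∈ lam, 1 ≤ p.1 ∧ 1 ≤ p.2) {p : ℕ × ℕ}
    (hp : ∀ j < min a b, p ≠ (a - j, b - j)) (x : ℕ × ℕ → ℝ) :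
    phiComp lam a b (min a b) x p = x p := by
  rcases eq_or_ne p (a - min a b, b - min a b) with rfl | hlast
  · have hout : (a - min a b, b - min a b) ∉ lam := fun h => by
      have := hlam1 _ h
      simp only at this
      omega
    generalize hm : min a b = m at hout ⊢
    cases m with
    | zero => rfl
    | succ j =>
      rw [phiComp_succ_apply_succ (by omega), if_neg hout, sub_zero]
      exact phiComp_apply_of_forall_ne (Nat.zero_le j)
        (fun i _ hi h => by simp only [Prod.ext_iff] at h; omega) x
  · exact phiComp_apply_of_forall_ne (Nat.zero_le _)
      (fun j _ hj => (Nat.lt_or_eq_of_le hj).elim (hp j) (fun h => h ▸ hlast)) x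

end YoungDiagram

theorem chiR_eq_psi_comp_phi_general
    (lam : Finset (ℕ × ℕ))
    (hlam1 : ∀ p ∈ lam, 1 ≤ p.1 ∧ 1 ≤ p.2)
    (hdown : ∀ p ∈ lam, ∀ q : ℕ × ℕ, 1 ≤ q.1 → 1 ≤ q.2 → q ≤ p → q ∈ lam)
    (a b : ℕ) (hr : (a, b) ∈ lam)
    (x : ℕ × ℕ → ℝ) :
    chiR lam a b x = psiMap lam a b (phiComp lam a b (min a b) x) := by
  have hab : 0 < min a b := by have := hlam1 _ hr; simp only at this; omega
  funext p
  unfold chiR psiMap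
  by_cases hreg : p ∈ lam ∧ (p.1 : ℤ) - p.2 = (a : ℤ) - b ∧ p ≤ (a, b)
  swap
  · rw [if_neg hreg, if_neg hreg, phiComp_min_apply_of_forall_ne hlam1
      fun j hj h => hreg ((mem_diag_le_iff hlam1 hdown hr).2 ⟨j, hj, h⟩)]
  rw [if_pos hreg, if_pos hreg]
  obtain ⟨j, hj, rfl⟩ := (mem_diag_le_iff hlam1 hdown hr).1 hreg
  rcases Nat.eq_zero_or_pos j with rfl | hj0
  · simp only [Nat.sub_zero, if_true]
    rw [phiComp_min_apply_corner hr hab, phiMin_zero,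
      phiComp_apply_of_not_diag le_rfl (by simp only; omega),
      phiComp_apply_of_not_diag le_rfl (by simp only; omega)]
    linarith [min_add_max (x (a - 1, b)) (x (a, b - 1))]
  · have hne : (a - j, b - j) ≠ (a, b) := by simp only [ne_eq, Prod.ext_iff]; omega
    rw [if_neg hne, if_neg hne, phiComp_min_apply_diag hdown hr hj0 hj,
      phiComp_apply_of_not_diag le_rfl (by simp only; omega),
      phiComp_apply_of_not_diag le_rfl (by simp only; omega), phiMin]
    linarith [min_add_max (x (a - j - 1, b - j)) (x (a - j, b - j - 1))]

/-- Decomposition of Pak's map: `χ_r = ψ ∘ φ_{min(a,b)-1} ∘ ⋯ ∘ φ_0`. -/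
theorem chiR_eq_psi_comp_phi
    (lam : Finset (ℕ × ℕ))
    (hlam1 : ∀ p ∈ lam, 1 ≤ p.1 ∧ 1 ≤ p.2)
    (hdown : ∀ p ∈ lam, ∀ q : ℕ × ℕ, 1 ≤ q.1 → 1 ≤ q.2 → q ≤ p → q ∈ lam)
    (a b : ℕ) (hr : (a, b) ∈ lam)
    (x : ℕ × ℕ → ℝ) (hx : ∀ p, p ∉ lam → x p = 0) :
    chiR lam a b x = psiMap lam a b (phiComp lam a b (min a b) x) :=
  chiR_eq_psi_comp_phi_general lam hlam1 hdown a b hr x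
end

section
/- With the tropical maps φ_i as above, the composition φ_{min(a,b)-1} ∘ ⋯ ∘ φ_0 satisfies: its value at (i,j) is x_{(i,j)} if i - j ≠ ℓ; x_r + min(x_{(a-1,b)}, x_{(a,b-1)}) at (i,j) = r; and x_{(i,j)} + min(x_{(i-1,j)}, x_{(i,j-1)}) - min(x_{(i+1,j)}, x_{(i,j+1)}) at (i,j) < r with i - j = ℓ. -/
noncomputable def phiCoeff (a b i : ℕ) (x : ℕ × ℕ → ℝ) : ℝ :=
  min (x (a - i - 1, b - i)) (x (a - i, b - i - 1))

noncomputable def phiWeight (lam : Finset (ℕ × ℕ)) (a b i : ℕ) : ℕ × ℕ → ℝ := fun p =>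
  (if (a - i - 1, b - i - 1) ∈ lam ∧ p = (a - i - 1, b - i - 1) then (1 : ℝ) else 0) -
    (if (a - i, b - i) ∈ lam ∧ p = (a - i, b - i) then (1 : ℝ) else 0)

section

variable {lam : Finset (ℕ × ℕ)} {a b : ℕ}

theorem phiStep_eq_sub_smul (i : ℕ) (x : ℕ × ℕ → ℝ) :
    phiStep lam a b i x = x - phiCoeff a b i x • phiWeight lam a b i :=
  rfl

theorem phiWeight_apply_eq_zero {i : ℕ} (hi : i < min a b) {p : ℕ × ℕ}
    (hp : ¬(p ∈ lam ∧ (p.1 : ℤ) - p.2 = (a : ℤ) - b ∧ p ≤ (a, b))) :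
    phiWeight lam a b i p = 0 := by
  obtain ⟨p1, p2⟩ := p
  simp only [Prod.mk_le_mk] at hp
  rw [phiWeight, if_neg, if_neg, sub_zero]
  all_goals
    rintro ⟨hmem, hpeq⟩
    simp only [Prod.mk.injEq] at hpeq
    obtain ⟨rfl, rfl⟩ := hpeq
    exact hp ⟨hmem, by omega, by omega, by omega⟩

theorem phiComp_apply_eq_self {k : ℕ} (hk : k ≤ min a b) (x : ℕ × ℕ → ℝ)
    {p : ℕ × ℕ} (hp : ¬(p ∈ lam ∧ (p.1 : ℤ) - p.2 = (a : ℤ) - b ∧ p ≤ (a, b))) :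
    phiComp lam a b k x p = x p := by
  induction k with
  | zero => rfl
  | succ k ih =>
    change phiStep lam a b k (phiComp lam a b k x) p = x p
    rw [phiStep_eq_sub_smul, Pi.sub_apply, Pi.smul_apply, phiWeight_apply_eq_zero (by omega) hp,
      smul_zero, sub_zero, ih (by omega)]

/-- `m_i` reads only the two boxes next to the diagonal of `(a, b)`, which no `φ_j` moves. -/
theorem phiCoeff_phiComp {i k : ℕ} (hi : i < min a b) (hk : k ≤ min a b) (x : ℕ × ℕ → ℝ) :
    phiCoeff a b i (phiComp lam a b k x) = phiCoeff a b i x := by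
  rw [phiCoeff, phiCoeff, phiComp_apply_eq_self hk x (by omega),
    phiComp_apply_eq_self hk x (by omega)]

theorem phiComp_eq_sub_sum {k : ℕ} (hk : k ≤ min a b) (x : ℕ × ℕ → ℝ) :
    phiComp lam a b k x = x - ∑ j ∈ Finset.range k, phiCoeff a b j x • phiWeight lam a b j := by
  induction k with
  | zero => simp [phiComp]
  | succ k ih =>
    change phiStep lam a b k (phiComp lam a b k x) = _
    rw [phiStep_eq_sub_smul, phiCoeff_phiComp (by omega) (by omega), ih (by omega),
      Finset.sum_range_succ, sub_sub]

theorem phiWeight_apply_of_diag {i d : ℕ} (hi : i < min a b) {p : ℕ × ℕ} (hp : p ∈ lam)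
    (hpa : p.1 + d = a) (hpb : p.2 + d = b) :
    phiWeight lam a b i p = (if i + 1 = d then 1 else 0) - (if i = d then 1 else 0) := by
  have hmem {q : ℕ × ℕ} : (q ∈ lam ∧ p = q) ↔ p = q := and_iff_right_of_imp fun h => h ▸ hp
  simp only [phiWeight, hmem]
  obtain ⟨p1, p2⟩ := p
  simp only [Prod.mk.injEq] at hpa hpb ⊢
  congr 2 <;> apply propext <;> omega

theorem phiCoeff_eq_min {d : ℕ} {p : ℕ × ℕ} (hpa : p.1 + d = a) (hpb : p.2 + d = b)
    (x : ℕ × ℕ → ℝ) :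
    phiCoeff a b d x = min (x (p.1 - 1, p.2)) (x (p.1, p.2 - 1)) := by
  rw [phiCoeff, show a - d = p.1 by omega, show b - d = p.2 by omega]

theorem phiComp_apply_of_diag {d : ℕ} (hd : d < min a b) (x : ℕ × ℕ → ℝ) {p : ℕ × ℕ}
    (hp : p ∈ lam) (hpa : p.1 + d = a) (hpb : p.2 + d = b) :
    phiComp lam a b (min a b) x p =
      x p + phiCoeff a b d x - if d = 0 then 0 else phiCoeff a b (d - 1) x := by
  rw [phiComp_eq_sub_sum le_rfl, Pi.sub_apply, Finset.sum_apply]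
  simp only [Pi.smul_apply, smul_eq_mul]
  rw [Finset.sum_congr rfl fun j hj =>
    congrArg _ (phiWeight_apply_of_diag (Finset.mem_range.mp hj) hp hpa hpb)]
  simp only [mul_sub, mul_ite, mul_one, mul_zero, Finset.sum_sub_distrib,
    Finset.sum_ite_eq', Finset.mem_range, hd, if_true]
  rcases d with _ | e
  · simp only [Nat.add_eq_zero_iff, one_ne_zero, and_false, if_false, if_true,
      Finset.sum_const_zero]
    ring
  · have he : e < min a b := by omega
    simp only [add_left_inj, Finset.sum_ite_eq', Finset.mem_range, he, if_true,
      e.succ_ne_zero, if_false, Nat.add_sub_cancel]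
    ring

end

theorem phiComp_formula_general
    (lam : Finset (ℕ × ℕ))
    (hlam1 : ∀ p ∈ lam, 1 ≤ p.1 ∧ 1 ≤ p.2)
    (a b : ℕ)
    (x : ℕ × ℕ → ℝ) :
    ∀ p : ℕ × ℕ,
      phiComp lam a b (min a b) x p =
        if p ∈ lam ∧ (p.1 : ℤ) - p.2 = (a : ℤ) - b ∧ p ≤ (a, b) then
          if p = (a, b) then x p + min (x (a - 1, b)) (x (a, b - 1))
          else x p + min (x (p.1 - 1, p.2)) (x (p.1, p.2 - 1)) -
               min (x (p.1 + 1, p.2)) (x (p.1, p.2 + 1))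
        else x p := by
  intro p
  split_ifs with hdiag hpr
  · obtain ⟨hp, -⟩ := hdiag
    subst hpr
    rw [phiComp_apply_of_diag (by have := hlam1 _ hp; omega) x hp (add_zero a) (add_zero b),
      phiCoeff_eq_min (p := (a, b)) (add_zero a) (add_zero b)]
    simp
  · obtain ⟨hp, hpd, hpab⟩ := hdiag
    have hp1 := hlam1 p hp
    obtain ⟨p1, p2⟩ := p
    simp only [Prod.mk_le_mk, Prod.mk.injEq] at hpd hpab hpr hp1
    obtain ⟨e, hea, heb⟩ : ∃ e, p1 + (e + 1) = a ∧ p2 + (e + 1) = b :=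
      ⟨a - p1 - 1, by omega, by omega⟩
    rw [phiComp_apply_of_diag (by omega) x hp hea heb, phiCoeff_eq_min (p := (p1, p2)) hea heb,
      if_neg e.succ_ne_zero, Nat.add_sub_cancel,
      phiCoeff_eq_min (p := (p1 + 1, p2 + 1)) (by omega) (by omega)]
    simp only [Nat.add_sub_cancel, min_comm (x (p1, p2 + 1))]
  · exact phiComp_apply_eq_self le_rfl x hdiag

/-- Explicit formula for the composition `φ_{min(a,b)-1} ∘ ⋯ ∘ φ_0` on a point
of `ℝ^λ` (with the convention `x_p = 0` for `p ∉ λ`): its value at a box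
`(i,j) ∈ λ` is `x_{(i,j)}` off the diagonal of `r = (a,b)`;
`x_r + min(x_{(a-1,b)}, x_{(a,b-1)})` at `r`; and
`x_{(i,j)} + min(x_{(i-1,j)}, x_{(i,j-1)}) - min(x_{(i+1,j)}, x_{(i,j+1)})`
for `(i,j) < r` on the diagonal. -/
theorem phiComp_formula
    (lam : Finset (ℕ × ℕ))
    (hlam1 : ∀ p ∈ lam, 1 ≤ p.1 ∧ 1 ≤ p.2)
    (hdown : ∀ p ∈ lam, ∀ q : ℕ × ℕ, 1 ≤ q.1 → 1 ≤ q.2 → q ≤ p → q ∈ lam)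
    (a b : ℕ) (hr : (a, b) ∈ lam)
    (x : ℕ × ℕ → ℝ) (hx : ∀ p, p ∉ lam → x p = 0) :
    ∀ p : ℕ × ℕ,
      phiComp lam a b (min a b) x p =
        if p ∈ lam ∧ (p.1 : ℤ) - p.2 = (a : ℤ) - b ∧ p ≤ (a, b) then
          if p = (a, b) then x p + min (x (a - 1, b)) (x (a, b - 1))
          else x p + min (x (p.1 - 1, p.2)) (x (p.1, p.2 - 1)) -
               min (x (p.1 + 1, p.2)) (x (p.1, p.2 + 1))
        else x p :=
  phiComp_formula_general lam hlam1 a b x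
end

section
/- Let P ⊂ ℝ^N be a bounded set, let φ : ℝ^N → ℝ^N be a piecewise map given by φ(x) = x - (x·v₁)w on H₁ = {x : x·v₁ ≤ x·v₂} and φ(x) = x - (x·v₂)w on H₂ = {x : x·v₂ ≤ x·v₁}, where w ∈ ℤ^N and v₁, v₂ ∈ ℤ^N satisfy w·v₁ = w·v₂ = 0. Then for every positive integer n, |nP ∩ ℤ^N| = |nφ(P) ∩ ℤ^N|. -/
/-!
Write `φ(x) = x - min(x·v₁, x·v₂) w`. Since `w·v₁ = w·v₂ = 0`, the coefficient `min(x·v₁, x·v₂)` is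
constant along the direction `w`, so `φ` is a shear whose inverse is the same shear with `-w`.
It is positively homogeneous, hence `nφ(P) = φ(nP)`, and it restricts to a bijection of `ℤ^N`
(the same formula with integer coefficients), so it matches the lattice points of `nP` with
those of `nφ(P)`.
-/

open Pointwise Matrix Function

theorem Set.ncard_preimage_image_of_semiconj {α β : Type*} {ι : β → α} {e : α → α} {g : β → β}
    (h : Semiconj ι g e) (he : Injective e) (hg : Bijective g) (S : Set α) :
    (ι ⁻¹' (e '' S)).ncard = (ι ⁻¹' S).ncard := by
  suffices ι ⁻¹' (e '' S) = g '' (ι ⁻¹' S) by rw [this, Set.ncard_image_of_injective _ hg.1]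
  ext z
  obtain ⟨z, rfl⟩ := hg.2 z
  simp only [Set.mem_preimage, Set.mem_image, h z, he.eq_iff, hg.1.eq_iff, exists_eq_right]

section Mutation

variable {ι R : Type*} [Fintype ι] [CommRing R] [LinearOrder R]

def mutation (w a b x : ι → R) : ι → R :=
  x - min (x ⬝ᵥ a) (x ⬝ᵥ b) • w

variable {w a b : ι → R}

theorem mutation_eq_ite (x : ι → R) :
    mutation w a b x = if x ⬝ᵥ a ≤ x ⬝ᵥ b then x - (x ⬝ᵥ a) • w else x - (x ⬝ᵥ b) • w := by
  rw [mutation, min_def]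
  split_ifs <;> rfl

theorem mutation_dotProduct {v : ι → R} (hv : w ⬝ᵥ v = 0) (x : ι → R) :
    mutation w a b x ⬝ᵥ v = x ⬝ᵥ v := by
  simp [mutation, sub_dotProduct, hv]

theorem mutation_neg_mutation (ha : w ⬝ᵥ a = 0) (hb : w ⬝ᵥ b = 0) (x : ι → R) :
    mutation (-w) a b (mutation w a b x) = x := by
  rw [mutation, mutation_dotProduct ha, mutation_dotProduct hb, mutation, smul_neg, sub_neg_eq_add,
    sub_add_cancel]

theorem mutation_bijective (ha : w ⬝ᵥ a = 0) (hb : w ⬝ᵥ b = 0) : Bijective (mutation w a b) := by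
  refine bijective_iff_has_inverse.2 ⟨mutation (-w) a b, mutation_neg_mutation ha hb, fun x => ?_⟩
  simpa using mutation_neg_mutation (w := -w) (by simpa using ha) (by simpa using hb) x

theorem mutation_smul [IsOrderedRing R] {c : R} (hc : 0 ≤ c) (x : ι → R) :
    mutation w a b (c • x) = c • mutation w a b x := by
  simp only [mutation, smul_dotProduct, smul_eq_mul, ← mul_min_of_nonneg _ _ hc, smul_sub,
    smul_smul]

theorem map_mutation {S : Type*} [CommRing S] [LinearOrder S] (f : R →+* S) (hf : Monotone f)
    (x : ι → R) : f ∘ mutation w a b x = mutation (f ∘ w) (f ∘ a) (f ∘ b) (f ∘ x) := by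
  ext i
  simp [mutation, ← RingHom.map_dotProduct, hf.map_min]

end Mutation

theorem lattice_count_invariant_under_mutation_general
    (N : ℕ) (P : Set (Fin N → ℝ))
    (w v₁ v₂ : Fin N → ℤ)
    (h1 : ∑ i, w i * v₁ i = 0) (h2 : ∑ i, w i * v₂ i = 0)
    (n : ℕ) :
    Set.ncard {z : Fin N → ℤ | (fun i => (z i : ℝ)) ∈ (n : ℝ) • P} =
    Set.ncard {z : Fin N → ℤ | (fun i => (z i : ℝ)) ∈ (n : ℝ) •
      ((fun x : Fin N → ℝ =>
        if ∑ i, x i * (v₁ i : ℝ) ≤ ∑ i, x i * (v₂ i : ℝ) then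
          x - (∑ i, x i * (v₁ i : ℝ)) • fun i => (w i : ℝ)
        else
          x - (∑ i, x i * (v₂ i : ℝ)) • fun i => (w i : ℝ)) '' P)} := by
  let cast : ℤ →+* ℝ := Int.castRingHom ℝ
  have hφ : (fun x : Fin N → ℝ =>
        if ∑ i, x i * (v₁ i : ℝ) ≤ ∑ i, x i * (v₂ i : ℝ) then
          x - (∑ i, x i * (v₁ i : ℝ)) • fun i => (w i : ℝ)
        else
          x - (∑ i, x i * (v₂ i : ℝ)) • fun i => (w i : ℝ)) =
      mutation (cast ∘ w) (cast ∘ v₁) (cast ∘ v₂) :=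
    funext fun x => (mutation_eq_ite x).symm
  have hφ_inj : Injective (mutation (cast ∘ w) (cast ∘ v₁) (cast ∘ v₂)) :=
    (mutation_bijective (by rw [← RingHom.map_dotProduct, dotProduct, h1, map_zero])
      (by rw [← RingHom.map_dotProduct, dotProduct, h2, map_zero])).1
  rw [hφ, ← Set.image_smul_comm _ _ _ (mutation_smul (Nat.cast_nonneg n))]
  exact (Set.ncard_preimage_image_of_semiconj (map_mutation cast Int.cast_mono) hφ_inj
    (mutation_bijective h1 h2) _).symm

/-- A piecewise unimodular tropical map with two regions of linearity preserves
lattice point counts of all dilates: for bounded `P ⊆ ℝ^N`, `w, v₁, v₂ ∈ ℤ^N`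
with `w·v₁ = w·v₂ = 0`, and `φ(x) = x - (x·v₁)w` on `{x·v₁ ≤ x·v₂}`,
`φ(x) = x - (x·v₂)w` on `{x·v₂ ≤ x·v₁}`, we have `|nP ∩ ℤ^N| = |nφ(P) ∩ ℤ^N|`
for all `n ≥ 1`. -/
theorem lattice_count_invariant_under_mutation
    (N : ℕ) (P : Set (Fin N → ℝ)) (hP : Bornology.IsBounded P)
    (w v₁ v₂ : Fin N → ℤ)
    (h1 : ∑ i, w i * v₁ i = 0) (h2 : ∑ i, w i * v₂ i = 0)
    (n : ℕ) (hn : 0 < n) :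
    Set.ncard {z : Fin N → ℤ | (fun i => (z i : ℝ)) ∈ (n : ℝ) • P} =
    Set.ncard {z : Fin N → ℤ | (fun i => (z i : ℝ)) ∈ (n : ℝ) •
      ((fun x : Fin N → ℝ =>
        if ∑ i, x i * (v₁ i : ℝ) ≤ ∑ i, x i * (v₂ i : ℝ) then
          x - (∑ i, x i * (v₁ i : ℝ)) • fun i => (w i : ℝ)
        else
          x - (∑ i, x i * (v₂ i : ℝ)) • fun i => (w i : ℝ)) '' P)} :=
  lattice_count_invariant_under_mutation_general N P w v₁ v₂ h1 h2 n
end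

section
/- Let λ ⊆ [m₁]×[m₂] be a Young diagram containing two adjacent diagonals ℓ and ℓ+1 (with ℓ ≥ 0) of the same length t, and let x ∈ O(λ)^k_d with d_ℓ = d_{ℓ+1}. Writing α₁,…,α_t for the boxes on diagonal ℓ and β₁,…,β_t for the corresponding boxes on diagonal ℓ+1 with α_i ≤ β_i, we have x_{α_i} = x_{β_i} for all i. -/
/-!
The entries of `x` on diagonal `ℓ` sum to `d ℓ`, those on diagonal `ℓ + 1` to `d (ℓ + 1) = d ℓ`,
and the order condition gives `x (α i) ≤ x (β i)` termwise; a termwise inequality between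
equal finite sums is an equality in every term.
-/

open Finset

theorem Finset.sum_filter_eq_sum_of_setOf_eq_range {α ι M : Type*} [Fintype ι]
    [AddCommMonoid M] [DecidableEq α] (s : Finset α) (P : α → Prop) [DecidablePred P]
    {f : ι → α} (hf : Function.Injective f) (hrange : {p ∈ (s : Set α) | P p} = Set.range f)
    (g : α → M) :
    ∑ p ∈ s.filter P, g p = ∑ i, g (f i) := by
  have himage : s.filter P = univ.image f := by
    apply coe_injective
    rw [coe_filter, coe_image, coe_univ, Set.image_univ]
    exact hrange
  rw [himage, sum_image hf.injOn]

theorem sum_diagonal_eq_of_setOf_eq_range {ι : Type*} [Fintype ι] (lam : Finset (ℕ × ℕ))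
    (d : ℤ → ℕ) (x : ℕ × ℕ → ℝ)
    (hx : ∀ m : ℤ, (∃ p ∈ lam, (p.1 : ℤ) - p.2 = m) →
      ∑ p ∈ lam.filter (fun p => (p.1 : ℤ) - p.2 = m), x p = d m)
    {m : ℤ} {f : ι → ℕ × ℕ} (hf : Function.Injective f)
    (hrange : {p ∈ (lam : Set (ℕ × ℕ)) | (p.1 : ℤ) - p.2 = m} = Set.range f) (i : ι) :
    ∑ j, x (f j) = d m := by
  have hfi : f i ∈ {p ∈ (lam : Set (ℕ × ℕ)) | (p.1 : ℤ) - p.2 = m} := hrange ▸ ⟨i, rfl⟩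
  rw [← sum_filter_eq_sum_of_setOf_eq_range lam _ hf hrange x]
  exact hx m ⟨f i, hfi⟩

theorem restrictedOrderPolytope_equal_diagonals_general
    (lam : Finset (ℕ × ℕ))
    (d : ℤ → ℕ) (ℓ : ℤ)
    (t : ℕ) (α β : Fin t → ℕ × ℕ)
    (hαβ : ∀ i, α i ∈ lam ∧ β i ∈ lam ∧ α i ≤ β i)
    (hαinj : Function.Injective α) (hβinj : Function.Injective β)
    (hα : {p ∈ (lam : Set (ℕ × ℕ)) | (p.1 : ℤ) - p.2 = ℓ} = Set.range α)
    (hβ : {p ∈ (lam : Set (ℕ × ℕ)) | (p.1 : ℤ) - p.2 = ℓ + 1} = Set.range β)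
    (x : ℕ × ℕ → ℝ)
    (hx2 : ∀ p ∈ lam, ∀ q ∈ lam, p ≤ q → x p ≤ x q)
    (hx3 : ∀ m : ℤ, (∃ p ∈ lam, (p.1 : ℤ) - p.2 = m) →
      ∑ p ∈ lam.filter (fun p => (p.1 : ℤ) - p.2 = m), x p = d m)
    (hd : d ℓ = d (ℓ + 1)) :
    ∀ i, x (α i) = x (β i) := by
  intro i
  have hle : ∀ j ∈ (univ : Finset (Fin t)), x (α j) ≤ x (β j) := fun j _ =>
    hx2 _ (hαβ j).1 _ (hαβ j).2.1 (hαβ j).2.2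
  have hsum : ∑ j, x (α j) = ∑ j, x (β j) := by
    rw [sum_diagonal_eq_of_setOf_eq_range lam d x hx3 hαinj hα i,
      sum_diagonal_eq_of_setOf_eq_range lam d x hx3 hβinj hβ i, hd]
  exact (sum_eq_sum_iff_of_le hle).mp hsum i (mem_univ i)

/-- If a Young diagram `λ` has two adjacent diagonals `ℓ` and `ℓ+1` (with
`ℓ ≥ 0`) of the same length `t`, with corresponding boxes `α i ≤ β i`, and
`x` lies in the restricted order polytope `O(λ)^k_d` with `d_ℓ = d_{ℓ+1}`,
then `x_{α i} = x_{β i}` for all `i`. -/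
theorem restrictedOrderPolytope_equal_diagonals
    (lam : Finset (ℕ × ℕ))
    (hlam1 : ∀ p ∈ lam, 1 ≤ p.1 ∧ 1 ≤ p.2)
    (hdown : ∀ p ∈ lam, ∀ q : ℕ × ℕ, 1 ≤ q.1 → 1 ≤ q.2 → q ≤ p → q ∈ lam)
    (k : ℕ) (d : ℤ → ℕ) (ℓ : ℤ) (hℓ : 0 ≤ ℓ)
    (t : ℕ) (α β : Fin t → ℕ × ℕ)
    (hαβ : ∀ i, α i ∈ lam ∧ β i ∈ lam ∧ α i ≤ β i)
    (hαinj : Function.Injective α) (hβinj : Function.Injective β)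
    (hα : {p ∈ (lam : Set (ℕ × ℕ)) | (p.1 : ℤ) - p.2 = ℓ} = Set.range α)
    (hβ : {p ∈ (lam : Set (ℕ × ℕ)) | (p.1 : ℤ) - p.2 = ℓ + 1} = Set.range β)
    (x : ℕ × ℕ → ℝ)
    (hx1 : ∀ p ∈ lam, 0 ≤ x p ∧ x p ≤ k)
    (hx2 : ∀ p ∈ lam, ∀ q ∈ lam, p ≤ q → x p ≤ x q)
    (hx3 : ∀ m : ℤ, (∃ p ∈ lam, (p.1 : ℤ) - p.2 = m) →
      ∑ p ∈ lam.filter (fun p => (p.1 : ℤ) - p.2 = m), x p = d m)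
    (hd : d ℓ = d (ℓ + 1)) :
    ∀ i, x (α i) = x (β i) :=
  restrictedOrderPolytope_equal_diagonals_general lam d ℓ t α β hαβ hαinj hβinj hα hβ x hx2 hx3 hd
end
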